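/- arXiv:2512.18042 — 2 statements merged into one kernel-verified Lean document; each statement's English description precedes it below -/
import Mathlib

section
/- Suppose that for every finite group G and every nonlinear χ ∈ Irr(G) there exist a proper subgroup H < G and ψ ∈ Irr(H) with ℚ(χ) ⊆ ℚ(ψ) and [ℚ(ψ) : ℚ(χ)] ≤ χ(1)/ψ(1). Then for every finite group G and every χ ∈ Irr(G), the cyclotomic deficiency satisfies [ℚ(ζ_{c(χ)}) : ℚ(χ)] ≤ χ(1). -/
/-!
Strong induction on `|G|`. A linear character takes values in a finite cyclic group of roots of
unity, so `ℚ(χ) = ℚ(ζ_m)` is its own conductor field and the deficiency is `1`. Otherwise take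
`H < G` and `ψ` from the hypothesis. Since `ℚ(ζ_a) ∩ ℚ(ζ_b) = ℚ(ζ_{gcd(a,b)})` (a degree count
against `ℚ(ζ_a)ℚ(ζ_b) = ℚ(ζ_{lcm(a,b)})`), the conductor of an abelian field divides every `n` with
`F ⊆ ℚ(ζ_n)`; hence `ℚ(χ) ⊆ ℚ(ψ)` gives `ℚ(ζ_{c(χ)}) ⊆ ℚ(ζ_{c(ψ)})`, and the tower law yields
`[ℚ(ζ_{c(χ)}) : ℚ(χ)] ≤ [ℚ(ψ) : ℚ(χ)] · [ℚ(ζ_{c(ψ)}) : ℚ(ψ)] ≤ [ℚ(ψ) : ℚ(χ)] · ψ(1) ≤ χ(1)`.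
-/
open scoped Classical

/-- The field of values of a character `χ`. -/
noncomputable def Qfield {G : Type*} (χ : G → ℂ) : IntermediateField ℚ ℂ :=
  IntermediateField.adjoin ℚ (Set.range χ)

/-- The `n`-th cyclotomic field inside `ℂ`. -/
noncomputable def Qcyc (n : ℕ) : IntermediateField ℚ ℂ :=
  IntermediateField.adjoin ℚ {x : ℂ | x ^ n = 1}

/-- The conductor of an abelian number field. -/
noncomputable def condF (F : IntermediateField ℚ ℂ) : ℕ :=
  sInf {n : ℕ | 0 < n ∧ F ≤ Qcyc n}

/-- Relative degree `[L : K]` via absolute degrees. -/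
noncomputable def relDeg (K L : IntermediateField ℚ ℂ) : ℕ :=
  Module.finrank ℚ L / Module.finrank ℚ K

/-- `χ` is the character of a `d`-dimensional irreducible complex representation. -/
def IsIrrCharOfDeg (G : Type*) [Group G] (χ : G → ℂ) (d : ℕ) : Prop :=
  ∃ ρ : Representation ℂ G (Fin d → ℂ),
    IsSimpleModule (MonoidAlgebra ℂ G) ρ.asModule ∧
    ∀ g, χ g = LinearMap.trace ℂ (Fin d → ℂ) (ρ g)

/-- `χ` is an irreducible complex character of `G`. -/
def IsIrrChar (G : Type*) [Group G] (χ : G → ℂ) : Prop :=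
  ∃ d, IsIrrCharOfDeg G χ d

/-- `χ` is a complex character of `G`. -/
def IsChar (G : Type*) [Group G] (χ : G → ℂ) : Prop :=
  ∃ (d : ℕ) (ρ : Representation ℂ G (Fin d → ℂ)),
    ∀ g, χ g = LinearMap.trace ℂ (Fin d → ℂ) (ρ g)

/-- Inner product of class functions. -/
noncomputable def innerChar {H : Type*} [Fintype H] (α β : H → ℂ) : ℂ :=
  (Fintype.card H : ℂ)⁻¹ * ∑ h, α h * (starRingEnd ℂ) (β h)

/-- The induced character `ψ^G`. -/
noncomputable def inducedChar {G : Type*} [Group G] [Fintype G] (H : Subgroup G)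
    (ψ : H → ℂ) (g : G) : ℂ :=
  (Nat.card H : ℂ)⁻¹ *
    ∑ x : G, if h : x⁻¹ * g * x ∈ H then ψ ⟨x⁻¹ * g * x, h⟩ else 0


open Module IntermediateField

lemma Nat.totient_gcd_mul_totient_lcm (a b : ℕ) :
    (a.gcd b).totient * (a.lcm b).totient = a.totient * b.totient := by
  rcases Nat.eq_zero_or_pos (a.gcd b) with h | hg
  · obtain ⟨rfl, rfl⟩ := Nat.gcd_eq_zero_iff.1 h
    simp
  have h₁ := Nat.totient_gcd_mul_totient_mul a b
  have h₂ := Nat.totient_gcd_mul_totient_mul (a.gcd b) (a.lcm b)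
  rw [Nat.gcd_eq_left ((a.gcd_dvd_left b).trans (a.dvd_lcm_left b)), Nat.gcd_mul_lcm] at h₂
  exact Nat.eq_of_mul_eq_mul_right hg (h₂.symm.trans h₁)

lemma IntermediateField.finiteDimensional_of_le {K L : Type*} [Field K] [Field L] [Algebra K L]
    {E F : IntermediateField K L} (h : E ≤ F) [FiniteDimensional K F] : FiniteDimensional K E :=
  .of_injective (inclusion h).toLinearMap (inclusion h).injective

lemma qcyc_mono {a b : ℕ} (h : a ∣ b) : Qcyc a ≤ Qcyc b := by
  refine adjoin.mono _ _ _ fun x (hx : x ^ a = 1) ↦ ?_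
  obtain ⟨c, rfl⟩ := h
  show x ^ (a * c) = 1
  rw [pow_mul, hx, one_pow]

lemma qcyc_eq_adjoin {n : ℕ} {ζ : ℂ} (hζ : IsPrimitiveRoot ζ n) (hn : n ≠ 0) :
    Qcyc n = ℚ⟮ζ⟯ := by
  have : NeZero n := ⟨hn⟩
  refine le_antisymm (adjoin_le_iff.2 fun x (hx : x ^ n = 1) ↦ ?_) ?_
  · obtain ⟨i, -, rfl⟩ := hζ.eq_pow_of_pow_eq_one hx
    exact pow_mem (mem_adjoin_simple_self ℚ ζ) i
  · exact adjoin_simple_le_iff.2 (subset_adjoin ℚ _ hζ.pow_eq_one)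

instance isCyclotomicExtension_qcyc (n : ℕ) [NeZero n] : IsCyclotomicExtension {n} ℚ (Qcyc n) :=
  have hζ := Complex.isPrimitiveRoot_exp n (NeZero.ne n)
  (isCyclotomicExtension_singleton_iff_eq_adjoin n ℚ ℂ _ hζ).2 (qcyc_eq_adjoin hζ (NeZero.ne n))

instance finiteDimensional_qcyc (n : ℕ) [NeZero n] : FiniteDimensional ℚ (Qcyc n) :=
  IsCyclotomicExtension.finite_of_singleton n ℚ _

lemma finrank_qcyc (n : ℕ) [NeZero n] : finrank ℚ (Qcyc n) = n.totient :=
  IsCyclotomicExtension.finrank _ (Polynomial.cyclotomic.irreducible_rat (NeZero.pos n))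

lemma qcyc_sup {a b : ℕ} (ha : a ≠ 0) (hb : b ≠ 0) : Qcyc a ⊔ Qcyc b = Qcyc (a.lcm b) := by
  refine le_antisymm (sup_le (qcyc_mono (a.dvd_lcm_left b)) (qcyc_mono (a.dvd_lcm_right b))) ?_
  have hζa := Complex.isPrimitiveRoot_exp a ha
  have hζb := Complex.isPrimitiveRoot_exp b hb
  rw [qcyc_eq_adjoin (hζa.pow_mul_pow_lcm hζb ha hb) (Nat.lcm_ne_zero ha hb), adjoin_simple_le_iff]
  exact mul_mem (pow_mem (le_sup_left (a := Qcyc a) (subset_adjoin ℚ _ hζa.pow_eq_one)) _)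
    (pow_mem (le_sup_right (b := Qcyc b) (subset_adjoin ℚ _ hζb.pow_eq_one)) _)

lemma IntermediateField.finrank_sup_mul_finrank_inf_le {K L : Type*} [Field K] [Field L]
    [Algebra K L] (A B : IntermediateField K L) [FiniteDimensional K A] [FiniteDimensional K B] :
    finrank K ↥(A ⊔ B) * finrank K ↥(A ⊓ B) ≤ finrank K A * finrank K B := by
  have hA : A ⊓ B ≤ A := inf_le_left
  have hB : A ⊓ B ≤ B := inf_le_right
  have hAB : A ⊓ B ≤ A ⊔ B := hA.trans le_sup_left
  have hsup : (A ⊓ B).relfinrank (A ⊔ B) ≤ (A ⊓ B).relfinrank A * (A ⊓ B).relfinrank B := by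
    rw [relfinrank_eq_finrank_of_le hAB, relfinrank_eq_finrank_of_le hA,
      relfinrank_eq_finrank_of_le hB, ← extendScalars_sup hA hB]
    exact finrank_sup_le _ _
  rw [← finrank_bot_mul_relfinrank hA, ← finrank_bot_mul_relfinrank hB,
    ← finrank_bot_mul_relfinrank hAB]
  calc _ = finrank K ↥(A ⊓ B) * (finrank K ↥(A ⊓ B) * (A ⊓ B).relfinrank (A ⊔ B)) := by ring
    _ ≤ finrank K ↥(A ⊓ B) * (finrank K ↥(A ⊓ B) *
        ((A ⊓ B).relfinrank A * (A ⊓ B).relfinrank B)) := by gcongr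
    _ = _ := by ring

lemma qcyc_inf {a b : ℕ} (ha : a ≠ 0) (hb : b ≠ 0) : Qcyc a ⊓ Qcyc b = Qcyc (a.gcd b) := by
  have : NeZero a := ⟨ha⟩
  have : NeZero b := ⟨hb⟩
  have : NeZero (a.gcd b) := ⟨Nat.gcd_ne_zero_left ha⟩
  have : NeZero (a.lcm b) := ⟨Nat.lcm_ne_zero ha hb⟩
  have hle : Qcyc (a.gcd b) ≤ Qcyc a ⊓ Qcyc b :=
    le_inf (qcyc_mono (a.gcd_dvd_left b)) (qcyc_mono (a.gcd_dvd_right b))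
  have : FiniteDimensional ℚ ↥(Qcyc a ⊓ Qcyc b) := finiteDimensional_of_le inf_le_left
  -- `[ℚ(ζ_a) ∩ ℚ(ζ_b) : ℚ] · φ(lcm) ≤ φ(a) φ(b) = φ(gcd) φ(lcm)`
  refine (eq_of_le_of_finrank_le hle ?_).symm
  have key := finrank_sup_mul_finrank_inf_le (Qcyc a) (Qcyc b)
  rw [qcyc_sup ha hb, finrank_qcyc, finrank_qcyc, finrank_qcyc,
    ← Nat.totient_gcd_mul_totient_lcm, mul_comm] at key
  rw [finrank_qcyc]
  exact Nat.le_of_mul_le_mul_right key (Nat.totient_pos.2 (NeZero.pos _))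

section Conductor

variable {F : IntermediateField ℚ ℂ} {n : ℕ}

lemma condF_mem (hn : 0 < n) (hF : F ≤ Qcyc n) : 0 < condF F ∧ F ≤ Qcyc (condF F) :=
  Nat.sInf_mem (s := {n | 0 < n ∧ F ≤ Qcyc n}) ⟨n, hn, hF⟩

lemma condF_dvd (hn : 0 < n) (hF : F ≤ Qcyc n) : condF F ∣ n := by
  obtain ⟨hc, hFc⟩ := condF_mem hn hF
  have hgcd : F ≤ Qcyc ((condF F).gcd n) := qcyc_inf hc.ne' hn.ne' ▸ le_inf hFc hF
  have hle : condF F ≤ (condF F).gcd n :=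
    Nat.sInf_le (s := {n | 0 < n ∧ F ≤ Qcyc n}) ⟨Nat.gcd_pos_of_pos_right _ hn, hgcd⟩
  rw [← (Nat.le_of_dvd hc (Nat.gcd_dvd_left _ _)).antisymm hle]
  exact Nat.gcd_dvd_right _ _

lemma qcyc_condF_le (hn : 0 < n) (hF : F ≤ Qcyc n) : Qcyc (condF F) ≤ Qcyc n :=
  qcyc_mono (condF_dvd hn hF)

lemma qcyc_condF_qcyc (hn : 0 < n) : Qcyc (condF (Qcyc n)) = Qcyc n :=
  (qcyc_condF_le hn le_rfl).antisymm (condF_mem hn le_rfl).2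

end Conductor

section RelDeg

variable {K L M : IntermediateField ℚ ℂ}

lemma relDeg_eq_relfinrank (h : K ≤ L) [FiniteDimensional ℚ K] : relDeg K L = K.relfinrank L := by
  rw [relDeg, ← finrank_bot_mul_relfinrank h, Nat.mul_div_cancel_left _ finrank_pos]

lemma relDeg_self (K : IntermediateField ℚ ℂ) [FiniteDimensional ℚ K] : relDeg K K = 1 :=
  Nat.div_self finrank_pos

lemma relDeg_mono_right (h : L ≤ M) [FiniteDimensional ℚ M] : relDeg K L ≤ relDeg K M :=
  Nat.div_le_div_right (finrank_le_of_le_right h)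

lemma relDeg_mul_relDeg (hKL : K ≤ L) (hLM : L ≤ M) [FiniteDimensional ℚ K]
    [FiniteDimensional ℚ L] : relDeg K L * relDeg L M = relDeg K M := by
  rw [relDeg_eq_relfinrank hKL, relDeg_eq_relfinrank hLM, relDeg_eq_relfinrank (hKL.trans hLM),
    relfinrank_mul_relfinrank hKL hLM]

lemma relDeg_qcyc_condF_le_mul {F E : IntermediateField ℚ ℂ} {n : ℕ} (hn : 0 < n) (hFE : F ≤ E)
    (hE : E ≤ Qcyc n) :
    relDeg F (Qcyc (condF F)) ≤ relDeg F E * relDeg E (Qcyc (condF E)) := by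
  obtain ⟨hcE, hEc⟩ := condF_mem hn hE
  have : NeZero (condF E) := ⟨hcE.ne'⟩
  have : FiniteDimensional ℚ E := finiteDimensional_of_le hEc
  have : FiniteDimensional ℚ F := finiteDimensional_of_le (hFE.trans hEc)
  calc relDeg F (Qcyc (condF F)) ≤ relDeg F (Qcyc (condF E)) :=
        relDeg_mono_right (qcyc_condF_le hcE (hFE.trans hEc))
    _ = relDeg F E * relDeg E (Qcyc (condF E)) := (relDeg_mul_relDeg hFE hEc).symm

end RelDeg

section Characters

variable {G : Type} [Group G]

lemma trace_mem_qcyc_card [Finite G] {V : Type*} [AddCommGroup V] [Module ℂ V]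
    [FiniteDimensional ℂ V] (ρ : Representation ℂ G V) (g : G) :
    LinearMap.trace ℂ V (ρ g) ∈ Qcyc (Nat.card G) := by
  rw [Module.End.trace_eq_sum_roots_charpoly_of_splits (IsAlgClosed.splits _)]
  refine (Qcyc _).toSubalgebra.multiset_sum_mem fun μ hμ ↦ subset_adjoin ℚ _ ?_
  obtain ⟨v, hv⟩ := ((Module.End.hasEigenvalue_iff_isRoot_charpoly _ μ).2
    (Polynomial.isRoot_of_mem_roots hμ)).exists_hasEigenvector
  have hpow := hv.pow_apply (Nat.card G)
  rw [← map_pow, pow_card_eq_one', map_one, Module.End.one_apply] at hpow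
  exact smul_left_injective ℂ hv.2 (hpow.symm.trans (one_smul ℂ v).symm)

lemma IsChar.qfield_le_qcyc [Finite G] {χ : G → ℂ} (h : IsChar G χ) :
    Qfield χ ≤ Qcyc (Nat.card G) := by
  obtain ⟨d, ρ, hχ⟩ := h
  exact adjoin_le_iff.2 (Set.range_subset_iff.2 fun g ↦ hχ g ▸ trace_mem_qcyc_card ρ g)

lemma IsIrrCharOfDeg.isChar {χ : G → ℂ} {d : ℕ} (h : IsIrrCharOfDeg G χ d) : IsChar G χ :=
  let ⟨ρ, _, hχ⟩ := h
  ⟨d, ρ, hχ⟩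

lemma IsIrrCharOfDeg.pos {χ : G → ℂ} {d : ℕ} (h : IsIrrCharOfDeg G χ d) : 0 < d := by
  obtain ⟨ρ, hsimple, -⟩ := h
  refine Nat.pos_of_ne_zero fun hd ↦ ?_
  subst hd
  have : Subsingleton ρ.asModule := inferInstanceAs (Subsingleton (Fin 0 → ℂ))
  exact not_nontrivial _ hsimple.nontrivial

lemma trace_mul_of_fin_one (f g : Module.End ℂ (Fin 1 → ℂ)) :
    LinearMap.trace ℂ _ (f * g) = LinearMap.trace ℂ _ f * LinearMap.trace ℂ _ g := by
  simp only [LinearMap.trace_eq_matrix_trace ℂ (Pi.basisFun ℂ (Fin 1)), LinearMap.toMatrix_mul,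
    Matrix.trace_fin_one, Matrix.mul_apply, Finset.univ_unique, Finset.sum_singleton,
    Fin.default_eq_zero]

lemma exists_qfield_trace_eq_qcyc [Finite G] (ρ : Representation ℂ G (Fin 1 → ℂ)) :
    ∃ m, 0 < m ∧ Qfield (fun g ↦ LinearMap.trace ℂ _ (ρ g)) = Qcyc m := by
  let χ : G →* ℂ :=
    { toFun := fun g ↦ LinearMap.trace ℂ _ (ρ g)
      map_one' := by simp
      map_mul' := fun g h ↦ by simp only [map_mul, trace_mul_of_fin_one] }
  let θ := χ.toHomUnits
  have : Finite θ.range := Set.finite_range θ |>.to_subtype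
  obtain ⟨u, hu⟩ := θ.range.isCyclic_iff_exists_zpowers_eq_top.1 inferInstance
  obtain ⟨g₀, rfl⟩ : u ∈ θ.range := hu ▸ Subgroup.mem_zpowers u
  have hfin : IsOfFinOrder (χ g₀) := χ.isOfFinOrder (isOfFinOrder_of_finite g₀)
  refine ⟨orderOf (χ g₀), hfin.orderOf_pos, ?_⟩
  rw [qcyc_eq_adjoin (IsPrimitiveRoot.orderOf (χ g₀)) hfin.orderOf_pos.ne']
  refine le_antisymm (adjoin_le_iff.2 (Set.range_subset_iff.2 fun g ↦ ?_))
    (adjoin_simple_le_iff.2 (subset_adjoin ℚ _ ⟨g₀, rfl⟩))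
  obtain ⟨k, hk⟩ := Subgroup.mem_zpowers_iff.1 (hu.symm ▸ θ.mem_range.2 ⟨g, rfl⟩ : θ g ∈ _)
  have hχg : χ g = χ g₀ ^ k :=
    (congrArg Units.val hk).symm.trans (Units.val_zpow_eq_zpow_val _ k)
  exact hχg ▸ zpow_mem (mem_adjoin_simple_self ℚ _) k

end Characters

theorem stmt8
    (hyp : ∀ (G : Type) [Group G] [Fintype G] (χ : G → ℂ) (d : ℕ),
      IsIrrCharOfDeg G χ d → 1 < d →
      ∃ (H : Subgroup G) (ψ : ↥H → ℂ) (e : ℕ), H ≠ ⊤ ∧ IsIrrCharOfDeg ↥H ψ e ∧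
        Qfield χ ≤ Qfield ψ ∧ relDeg (Qfield χ) (Qfield ψ) * e ≤ d) :
    ∀ (G : Type) [Group G] [Fintype G] (χ : G → ℂ) (d : ℕ), IsIrrCharOfDeg G χ d →
      relDeg (Qfield χ) (Qcyc (condF (Qfield χ))) ≤ d := by
  intro G _ _ χ d hχ
  induction hn : Nat.card G using Nat.strong_induction_on generalizing G χ d with
  | _ n ih =>
  obtain rfl | hd := Nat.eq_or_lt_of_le hχ.pos
  · obtain ⟨ρ, -, hρ⟩ := hχ
    obtain ⟨m, hm, hχm⟩ := exists_qfield_trace_eq_qcyc ρ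
    have : NeZero m := ⟨hm.ne'⟩
    rw [funext hρ, hχm, qcyc_condF_qcyc hm, relDeg_self]
  · obtain ⟨H, ψ, e, hH, hψ, hχψ, hdeg⟩ := hyp G χ d hχ hd
    have hcard : Nat.card H < n :=
      hn ▸ H.card_le_card_group.lt_of_ne (mt H.card_eq_iff_eq_top.1 hH)
    calc relDeg (Qfield χ) (Qcyc (condF (Qfield χ)))
        ≤ relDeg (Qfield χ) (Qfield ψ) * relDeg (Qfield ψ) (Qcyc (condF (Qfield ψ))) :=
          relDeg_qcyc_condF_le_mul Nat.card_pos hχψ hψ.isChar.qfield_le_qcyc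
      _ ≤ relDeg (Qfield χ) (Qfield ψ) * e := Nat.mul_le_mul_left _ (ih _ hcard H ψ e hψ rfl)
      _ ≤ d := hdeg
end

section
/- Conversely, suppose that for every finite group G and χ ∈ Irr(G), both (a) G contains an element of order c(χ) and (b) [ℚ(ζ_{c(χ)}) : ℚ(χ)] ≤ χ(1) hold. Then for every finite group G and nonlinear χ ∈ Irr(G), there exist a proper subgroup H < G and ψ ∈ Irr(H) with ℚ(χ) ⊆ ℚ(ψ) and [ℚ(ψ) : ℚ(χ)] ≤ χ(1)/ψ(1). -/
open scoped Classical

/-!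
Let `c` be the conductor of `ℚ(χ)` and `g ∈ G` an element of order `c`. The subgroup `⟨g⟩` is
proper, since otherwise `G` would be cyclic, hence abelian, and `χ` linear. A faithful linear
character `ψ` of `⟨g⟩` takes as values exactly the `c`-th roots of unity, so
`ℚ(ψ) = ℚ(ζ_c) ⊇ ℚ(χ)`, and `ψ(1) = 1` turns hypothesis (b) into the required degree bound.
-/

theorem IsSimpleModule.of_isScalarTower (K : Type*) {A M : Type*} [CommRing K] [Ring A]
    [Algebra K A] [AddCommGroup M] [Module K M] [Module A M] [IsScalarTower K A M]
    [IsSimpleModule K M] : IsSimpleModule A M := by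
  have : Nontrivial M := IsSimpleModule.nontrivial K M
  refine (isSimpleModule_iff A M).2 ⟨fun p => ?_⟩
  simpa using eq_bot_or_eq_top (p.restrictScalars K)

theorem Units.val_range_rootsOfUnity (n : ℕ) [NeZero n] (R : Type*) [CommRing R] :
    Set.range (fun ζ : rootsOfUnity n R => ((ζ : Rˣ) : R)) = {x : R | x ^ n = 1} := by
  rw [← Units.val_set_image_rootsOfUnity, ← Subtype.range_coe (s := (rootsOfUnity n R : Set Rˣ)),
    ← Set.range_comp]
  rfl

noncomputable def scalarRep {H : Type*} [Group H] (φ : H →* ℂ) :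
    Representation ℂ H (Fin 1 → ℂ) :=
  (algebraMap ℂ (Module.End ℂ (Fin 1 → ℂ))).toMonoidHom.comp φ

theorem isIrrCharOfDeg_one_of_monoidHom {H : Type*} [Group H] (φ : H →* ℂ) :
    IsIrrCharOfDeg H φ 1 := by
  refine ⟨scalarRep φ, ?_, fun h => ?_⟩
  · have : IsSimpleModule ℂ (scalarRep φ).asModule :=
      isSimpleModule_iff_finrank_eq_one.2 (Module.finrank_fin_fun ℂ)
    exact IsSimpleModule.of_isScalarTower ℂ
  · simp [scalarRep, Algebra.algebraMap_eq_smul_one, LinearMap.trace_one]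

theorem IsIrrCharOfDeg.eq_one_of_isMulCommutative {G : Type*} [Group G] [IsMulCommutative G]
    {χ : G → ℂ} {d : ℕ} (hχ : IsIrrCharOfDeg G χ d) : d = 1 := by
  obtain ⟨ρ, hρ, -⟩ := hχ
  have := (Representation.irreducible_iff_isSimpleModule_asModule ρ).2 hρ
  simpa using Representation.IsIrreducible.finrank_eq_one_of_isMulCommutative ρ

theorem exists_monoidHom_zpowers_range_eq {G : Type*} [Group G] (g : G) (hg : orderOf g ≠ 0) :
    ∃ φ : Subgroup.zpowers g →* ℂ, Set.range φ = {x : ℂ | x ^ orderOf g = 1} := by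
  have : NeZero (orderOf g) := ⟨hg⟩
  have hcard : Nat.card (Subgroup.zpowers g) = Nat.card (rootsOfUnity (orderOf g) ℂ) := by
    rw [Nat.card_zpowers, Complex.card_rootsOfUnity]
  let e := mulEquivOfCyclicCardEq hcard
  refine ⟨(Units.coeHom ℂ).comp ((rootsOfUnity (orderOf g) ℂ).subtype.comp e.toMonoidHom), ?_⟩
  rw [← Units.val_range_rootsOfUnity]
  exact e.surjective.range_comp fun ζ : rootsOfUnity (orderOf g) ℂ => ((ζ : ℂˣ) : ℂ)

theorem le_Qcyc_condF {F : IntermediateField ℚ ℂ} (hF : condF F ≠ 0) : F ≤ Qcyc (condF F) :=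
  (Nat.sInf_mem (Nat.nonempty_of_pos_sInf (Nat.pos_of_ne_zero hF))).2

theorem stmt10
    (hyp : ∀ (G : Type) [Group G] [Fintype G] (χ : G → ℂ) (d : ℕ),
      IsIrrCharOfDeg G χ d →
        (∃ g : G, orderOf g = condF (Qfield χ)) ∧
          relDeg (Qfield χ) (Qcyc (condF (Qfield χ))) ≤ d) :
    ∀ (G : Type) [Group G] [Fintype G] (χ : G → ℂ) (d : ℕ),
      IsIrrCharOfDeg G χ d → 1 < d →
      ∃ (H : Subgroup G) (ψ : ↥H → ℂ) (e : ℕ), H ≠ ⊤ ∧ IsIrrCharOfDeg ↥H ψ e ∧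
        Qfield χ ≤ Qfield ψ ∧ relDeg (Qfield χ) (Qfield ψ) * e ≤ d := by
  intro G _ _ χ d hχ hd
  obtain ⟨⟨g, hg⟩, hdeg⟩ := hyp G χ d hχ
  have hc : orderOf g ≠ 0 := (orderOf_pos g).ne'
  obtain ⟨ψ, hψ⟩ := exists_monoidHom_zpowers_range_eq g hc
  have hQψ : Qfield ψ = Qcyc (condF (Qfield χ)) := by rw [Qfield, hψ, hg, Qcyc]
  refine ⟨Subgroup.zpowers g, ψ, 1, fun htop => ?_, isIrrCharOfDeg_one_of_monoidHom ψ, ?_, ?_⟩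
  · have : IsCyclic G := isCyclic_iff_exists_zpowers_eq_top.2 ⟨g, htop⟩
    exact hd.ne' hχ.eq_one_of_isMulCommutative
  · exact hQψ ▸ le_Qcyc_condF (hg ▸ hc)
  · rwa [hQψ, mul_one]
end
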